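/- arXiv:0708.3357 — 2 statements merged into one kernel-verified Lean document; each statement's English description precedes it below -/
import Mathlib

section
/- For every equivariant pair (ρ,τ), every g = [a,b] ∈ G and every z ∈ ℂ, the function z ↦ J(g,z) satisfies (∂/∂z)[J(g,·)](z) = (conj(S(z)) − a·conj(S(g·z)))·J(g,z) and (∂/∂z̄)[J(g,·)](z) = −(S(z) − conj(a)·S(g·z))·J(g,z) (the Wirtinger-derivative form of the cohomology identity g*θ = θ − i·dJ(g,·)/J(g,·)). -/
noncomputable section

open Complex

/-- The group `G = 𝕋 ⋉ ℂ`, with elements `[a,b]`, acting on `ℂ` by `z ↦ a z + b`. -/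
@[ext]
structure GT : Type where
  a : Circle
  b : ℂ

namespace GT

instance : Group GT where
  mul g h := ⟨g.a * h.a, (g.a : ℂ) * h.b + g.b⟩
  one := ⟨1, 0⟩
  inv g := ⟨g.a⁻¹, -((g.a⁻¹ : ℂ) * g.b)⟩
  mul_assoc g h k := by
    refine GT.ext (mul_assoc _ _ _) ?_
    show ((g.a * h.a : Circle) : ℂ) * k.b + ((g.a : ℂ) * h.b + g.b)
        = (g.a : ℂ) * ((h.a : ℂ) * k.b + h.b) + g.b
    push_cast; ring
  one_mul g := by
    refine GT.ext (one_mul _) ?_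
    show ((1 : Circle) : ℂ) * g.b + 0 = g.b
    simp
  mul_one g := by
    refine GT.ext (mul_one _) ?_
    show (g.a : ℂ) * 0 + g.b = g.b
    simp
  inv_mul_cancel g := by
    refine GT.ext (inv_mul_cancel _) ?_
    show ((g.a⁻¹ : Circle) : ℂ) * g.b + -(((g.a : ℂ))⁻¹ * g.b) = 0
    push_cast; ring

/-- The action of `G` on `ℂ` : `[a,b]·z = a z + b`. -/
def act (g : GT) (z : ℂ) : ℂ := (g.a : ℂ) * z + g.b

end GT

/-- The Hermitian product `⟨z,w⟩ = z·conj w`. -/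
def herm (z w : ℂ) : ℂ := z * (starRingEnd ℂ) w

/-- The automorphic factor `j^α(g,z) = exp(2 i α Im⟨z, g⁻¹·0⟩)`. -/
def jfac (α : ℝ) (g : GT) (z : ℂ) : ℂ :=
  Complex.exp (2 * Complex.I * (α : ℂ) * ((herm z (GT.act g⁻¹ 0)).im : ℂ))

/-- The Wirtinger derivative `∂f/∂z = (1/2)(∂f/∂x − i ∂f/∂y)`. -/
def wderiv (f : ℂ → ℂ) (z : ℂ) : ℂ :=
  (1 / 2 : ℂ) * (fderiv ℝ f z 1 - Complex.I * fderiv ℝ f z Complex.I)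

/-- The anti-Wirtinger derivative `∂f/∂z̄ = (1/2)(∂f/∂x + i ∂f/∂y)`. -/
def wderivBar (f : ℂ → ℂ) (z : ℂ) : ℂ :=
  (1 / 2 : ℂ) * (fderiv ℝ f z 1 + Complex.I * fderiv ℝ f z Complex.I)

/-- The Euclidean Laplacian `Δ = 4 ∂²/∂z∂z̄`. -/
def lap (f : ℂ → ℂ) (z : ℂ) : ℂ := 4 * wderiv (fun w => wderivBar f w) z

/-- `S(z) = ν z + μ (τ(z)·∂τ̄/∂z̄(z) − τ̄(z)·∂τ/∂z̄(z))`. -/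
def Sfun (ν μ : ℝ) (τ : ℂ → ℂ) (z : ℂ) : ℂ :=
  (ν : ℂ) * z + (μ : ℂ) *
    (τ z * wderivBar (fun w => (starRingEnd ℂ) (τ w)) z - (starRingEnd ℂ) (τ z) * wderivBar τ z)

/-- `B(z) = ν + μ(|∂τ/∂z(z)|² − |∂τ/∂z̄(z)|²)`. -/
def Bfun (ν μ : ℝ) (τ : ℂ → ℂ) (z : ℂ) : ℝ :=
  ν + μ * (‖wderiv τ z‖ ^ 2 - ‖wderivBar τ z‖ ^ 2)

/-- The magnetic Schrödinger operator `L`. -/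
def Lop (ν μ : ℝ) (τ : ℂ → ℂ) (f : ℂ → ℂ) (z : ℂ) : ℂ :=
  - wderiv (fun w => wderivBar f w) z
    - (Sfun ν μ τ z * wderiv f z - (starRingEnd ℂ) (Sfun ν μ τ z) * wderivBar f z)
    + ((‖Sfun ν μ τ z‖ : ℂ)) ^ 2 * f z
    - ((μ : ℂ) / 4) *
        (τ z * lap (fun w => (starRingEnd ℂ) (τ w)) z - (starRingEnd ℂ) (τ z) * lap τ z) * f z

/-- The annihilation operator `A f = ∂f/∂z̄ + S f`. -/
def Aop (ν μ : ℝ) (τ : ℂ → ℂ) (f : ℂ → ℂ) (z : ℂ) : ℂ :=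
  wderivBar f z + Sfun ν μ τ z * f z

/-- The creation operator `Ã f = −∂f/∂z + conj(S) f`. -/
def Atop (ν μ : ℝ) (τ : ℂ → ℂ) (f : ℂ → ℂ) (z : ℂ) : ℂ :=
  - wderiv f z + (starRingEnd ℂ) (Sfun ν μ τ z) * f z

/-- `J(g,z) = j^ν(g,z)·j^μ(ρ(g),τ(z))`. -/
def Jfun (ν μ : ℝ) (ρ : GT → GT) (τ : ℂ → ℂ) (g : GT) (z : ℂ) : ℂ :=
  jfac ν g z * jfac μ (ρ g) (τ z)

/-- `φ_ρ(g,g') = Im(ν⟨g⁻¹·0,g'·0⟩ + μ⟨ρ(g⁻¹)·0, ρ(g')·0⟩)`. -/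
def phiRho (ν μ : ℝ) (ρ : GT → GT) (g g' : GT) : ℝ :=
  ((ν : ℂ) * herm (GT.act g⁻¹ 0) (GT.act g' 0)
    + (μ : ℂ) * herm (GT.act (ρ g⁻¹) 0) (GT.act (ρ g') 0)).im

/-- Membership in the lattice `Γ = ℤω₁ + ℤω₂`. -/
def inLattice (ω₁ ω₂ : ℂ) (γ : ℂ) : Prop := ∃ m n : ℤ, γ = (m : ℂ) * ω₁ + (n : ℂ) * ω₂

/-- Mixed `Γ`-automorphic form of type `(ν,μ)` w.r.t. the pair `(ρ,τ)`. -/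
def MixedForm (ν μ : ℝ) (ρ : GT → GT) (τ : ℂ → ℂ) (ω₁ ω₂ : ℂ) (F : ℂ → ℂ) : Prop :=
  ContDiff ℝ (⊤ : ℕ∞) F ∧ ∀ γ : ℂ, inLattice ω₁ ω₂ γ → ∀ z : ℂ,
    F (z + γ) = jfac (-ν) ⟨(1 : Circle), γ⟩ z * jfac (-μ) (ρ ⟨(1 : Circle), γ⟩) (τ z) * F z

/-- The Laguerre polynomial `L_k`. -/
def laguerre (k : ℕ) (x : ℝ) : ℝ :=
  ∑ j ∈ Finset.range (k + 1), (-1) ^ j * (k.choose j : ℝ) * x ^ j / (Nat.factorial j : ℝ)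


/-- The multiplier `χ_τ(γ) = exp(iφ(γ) − 2iμ Im⟨τ(0), ρ([1,γ])⁻¹·0⟩)`. -/
def chiTau (μ : ℝ) (ρ : GT → GT) (τ : ℂ → ℂ) (φ : ℂ → ℝ) (γ : ℂ) : ℂ :=
  Complex.exp (Complex.I * (φ γ : ℂ)
    - 2 * Complex.I * (μ : ℂ) * ((herm (τ 0) (GT.act (ρ ⟨1, γ⟩)⁻¹ 0)).im : ℂ))

/-- The eigenprojector kernel `K_k`. -/
def Kker (B : ℝ) (φ : ℂ → ℝ) (k : ℕ) (z w : ℂ) : ℂ :=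
  ((2 * B / Real.pi : ℝ) : ℂ) * Complex.exp (-Complex.I * ((φ z - φ w : ℝ) : ℂ)) *
    Complex.exp (2 * Complex.I * (B : ℂ) * ((herm z w).im : ℂ)) *
    Complex.exp (-((B * ‖z - w‖ ^ 2 : ℝ) : ℂ)) *
    ((laguerre k (2 * B * ‖z - w‖ ^ 2) : ℝ) : ℂ)

/-- The kernel `K^σ_ξ;k`. -/
def Kxi (σ : ℝ) (ξ : ℂ) (k : ℕ) (z w : ℂ) : ℂ :=
  ((2 * σ / Real.pi : ℝ) : ℂ) * Complex.exp (2 * Complex.I * ((herm (z - w) ξ).im : ℂ)) *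
    Complex.exp (2 * Complex.I * (σ : ℂ) * ((herm z w).im : ℂ)) *
    Complex.exp (-((σ * ‖z - w‖ ^ 2 : ℝ) : ℂ)) *
    ((laguerre k (2 * σ * ‖z - w‖ ^ 2) : ℝ) : ℂ)

/-- `m`-fold iterate of the creation operator `Ã`. -/
def AtopIter (ν μ : ℝ) (τ : ℂ → ℂ) (m : ℕ) (f : ℂ → ℂ) : ℂ → ℂ :=
  (fun u z => Atop ν μ τ u z)^[m] f


/-!
Both factors of `J` are exponentials of `α (w c̄ − w̄ c) = 2iα Im⟨w, c⟩` with `c = h⁻¹·0`, so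
`∂̄J / J` is the sum of two `jfacLogDerivBar` terms and, the exponent being purely imaginary,
`∂J / J` is minus its conjugate. Differentiating the equivariance `τ(g·w) = χ τ(w) + ψ` gives
`∂τ(g·z) = ā χ ∂τ(z)` and `∂̄τ(g·z) = a χ ∂̄τ(z)`; substituted into `S(g·z)` they yield the
transformation law `S(g·z) = a (S(z) + ∂̄J/J)`, which is the claim.
-/

open ComplexConjugate

def wirtingerCLM (p q : ℂ) : ℂ →L[ℝ] ℂ :=
  p • ContinuousLinearMap.id ℝ ℂ + q • Complex.conjCLE.toContinuousLinearMap

@[simp] lemma wirtingerCLM_apply (p q v : ℂ) : wirtingerCLM p q v = p * v + q * conj v := by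
  simp [wirtingerCLM]

lemma ContinuousLinearMap.eq_wirtingerCLM (ℓ : ℂ →L[ℝ] ℂ) :
    ℓ = wirtingerCLM ((1 / 2) * (ℓ 1 - I * ℓ I)) ((1 / 2) * (ℓ 1 + I * ℓ I)) := by
  ext1 v
  have hv : v = (v.re : ℝ) • (1 : ℂ) + (v.im : ℝ) • I := by
    simp [Complex.real_smul, Complex.re_add_im]
  rw [hv, map_add, map_smul, map_smul]
  simp only [Complex.real_smul, wirtingerCLM_apply, map_add, map_mul, map_one,
    Complex.conj_ofReal, Complex.conj_I]
  linear_combination (v.im : ℂ) * ℓ I * Complex.I_sq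

lemma HasFDerivAt.wderiv_eq {f : ℂ → ℂ} {z p q : ℂ} (h : HasFDerivAt f (wirtingerCLM p q) z) :
    wderiv f z = p := by
  simp only [wderiv, h.fderiv, wirtingerCLM_apply, Complex.conj_I, map_one]
  linear_combination (-p / 2 + q / 2) * Complex.I_sq

lemma HasFDerivAt.wderivBar_eq {f : ℂ → ℂ} {z p q : ℂ} (h : HasFDerivAt f (wirtingerCLM p q) z) :
    wderivBar f z = q := by
  simp only [wderivBar, h.fderiv, wirtingerCLM_apply, Complex.conj_I, map_one]
  linear_combination (p / 2 - q / 2) * Complex.I_sq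

lemma DifferentiableAt.hasFDerivAt_wirtinger {f : ℂ → ℂ} {z : ℂ} (hf : DifferentiableAt ℝ f z) :
    HasFDerivAt f (wirtingerCLM (wderiv f z) (wderivBar f z)) z := by
  rw [wderiv, wderivBar, ← ContinuousLinearMap.eq_wirtingerCLM]
  exact hf.hasFDerivAt

lemma HasFDerivAt.conj_wirtinger {f : ℂ → ℂ} {z p q : ℂ} (h : HasFDerivAt f (wirtingerCLM p q) z) :
    HasFDerivAt (fun w => conj (f w)) (wirtingerCLM (conj q) (conj p)) z := by
  refine (Complex.conjCLE.toContinuousLinearMap.hasFDerivAt.comp z h).congr_fderiv ?_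
  ext1 v
  simp [add_comm]

lemma wderivBar_conj {f : ℂ → ℂ} {z : ℂ} (hf : DifferentiableAt ℝ f z) :
    wderivBar (fun w => conj (f w)) z = conj (wderiv f z) :=
  hf.hasFDerivAt_wirtinger.conj_wirtinger.wderivBar_eq

lemma HasFDerivAt.mul_wirtinger {f g : ℂ → ℂ} {z p q p' q' : ℂ}
    (hf : HasFDerivAt f (wirtingerCLM p q) z) (hg : HasFDerivAt g (wirtingerCLM p' q') z) :
    HasFDerivAt (fun w => f w * g w)
      (wirtingerCLM (f z * p' + g z * p) (f z * q' + g z * q)) z := by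
  refine (hf.mul hg).congr_fderiv ?_
  ext1 v
  simp only [add_apply, smul_apply, wirtingerCLM_apply, smul_eq_mul]
  ring

lemma HasFDerivAt.cexp_wirtinger {f : ℂ → ℂ} {z p q : ℂ} (h : HasFDerivAt f (wirtingerCLM p q) z) :
    HasFDerivAt (fun w => Complex.exp (f w))
      (wirtingerCLM (Complex.exp (f z) * p) (Complex.exp (f z) * q)) z := by
  refine h.cexp.congr_fderiv ?_
  ext1 v
  simp only [smul_apply, wirtingerCLM_apply, smul_eq_mul]
  ring

lemma wderiv_comp_mul_add {f : ℂ → ℂ} {a b z : ℂ} (hf : DifferentiableAt ℝ f (a * z + b)) :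
    wderiv (fun w => f (a * w + b)) z = a * wderiv f (a * z + b) ∧
      wderivBar (fun w => f (a * w + b)) z = conj a * wderivBar f (a * z + b) := by
  have hlin : HasFDerivAt (fun w => a * w + b) (wirtingerCLM a 0) z := by
    refine (((hasFDerivAt_id z).const_mul a).add_const b).congr_fderiv ?_
    ext1 v
    simp
  have h := hf.hasFDerivAt_wirtinger.comp z hlin
  have : (wirtingerCLM (wderiv f (a * z + b)) (wderivBar f (a * z + b))).comp (wirtingerCLM a 0)
      = wirtingerCLM (a * wderiv f (a * z + b)) (conj a * wderivBar f (a * z + b)) := by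
    ext1 v
    simp only [ContinuousLinearMap.comp_apply, wirtingerCLM_apply, map_add, map_mul, map_zero]
    ring
  rw [this] at h
  exact ⟨h.wderiv_eq, h.wderivBar_eq⟩

lemma wderiv_mul_add_comp {f : ℂ → ℂ} {c d z : ℂ} (hf : DifferentiableAt ℝ f z) :
    wderiv (fun w => c * f w + d) z = c * wderiv f z ∧
      wderivBar (fun w => c * f w + d) z = c * wderivBar f z := by
  have h : HasFDerivAt (fun w => c * f w + d)
      (wirtingerCLM (c * wderiv f z) (c * wderivBar f z)) z := by
    refine ((hf.hasFDerivAt_wirtinger.const_mul c).add_const d).congr_fderiv ?_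
    ext1 v
    simp only [smul_apply, wirtingerCLM_apply, smul_eq_mul]
    ring
  exact ⟨h.wderiv_eq, h.wderivBar_eq⟩

lemma GT.act_inv_zero (g : GT) : GT.act g⁻¹ 0 = -(conj (g.a : ℂ) * g.b) := by
  change ((g.a⁻¹ : Circle) : ℂ) * 0 + -(((g.a⁻¹ : Circle) : ℂ) * g.b) = _
  rw [Circle.coe_inv_eq_conj, mul_zero, zero_add]

lemma Circle.coe_mul_conj (a : Circle) : (a : ℂ) * conj (a : ℂ) = 1 := by
  rw [Complex.mul_conj, Circle.normSq_coe, Complex.ofReal_one]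

lemma jfac_eq_exp (α : ℝ) (h : GT) (z : ℂ) :
    jfac α h z = Complex.exp (α * (z * conj (GT.act h⁻¹ 0) - conj z * GT.act h⁻¹ 0)) := by
  have him : ((herm z (GT.act h⁻¹ 0)).im : ℂ) * (2 * I)
      = z * conj (GT.act h⁻¹ 0) - conj z * GT.act h⁻¹ 0 := by
    rw [Complex.im_eq_sub_conj, div_mul_cancel₀ _ (by simp), herm, map_mul, Complex.conj_conj]
  rw [jfac, ← him]
  ring_nf

/-- `∂̄ log` of `w ↦ jfac α h (f w)` at a point where `f` has Wirtinger derivatives `p`, `q`. -/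
def jfacLogDerivBar (α : ℝ) (h : GT) (p q : ℂ) : ℂ :=
  α * (q * conj (GT.act h⁻¹ 0) - conj p * GT.act h⁻¹ 0)

lemma HasFDerivAt.jfac_comp {f : ℂ → ℂ} {z p q : ℂ} (α : ℝ) (h : GT)
    (hf : HasFDerivAt f (wirtingerCLM p q) z) :
    HasFDerivAt (fun w => jfac α h (f w))
      (wirtingerCLM (jfac α h (f z) * -conj (jfacLogDerivBar α h p q))
        (jfac α h (f z) * jfacLogDerivBar α h p q)) z := by
  set c := GT.act h⁻¹ 0
  have hexp : HasFDerivAt (fun w => α * (f w * conj c - conj (f w) * c))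
      (wirtingerCLM (-conj (jfacLogDerivBar α h p q)) (jfacLogDerivBar α h p q)) z := by
    refine (((hf.mul_const (conj c)).sub (hf.conj_wirtinger.mul_const c)).const_mul
      (α : ℂ)).congr_fderiv ?_
    ext1 v
    simp only [jfacLogDerivBar, smul_apply, sub_apply, wirtingerCLM_apply, smul_eq_mul, map_mul,
      map_sub, Complex.conj_ofReal, Complex.conj_conj, c]
    ring
  simpa only [jfac_eq_exp] using hexp.cexp_wirtinger

lemma hasFDerivAt_Jfun (ν μ : ℝ) (ρ : GT → GT) {τ : ℂ → ℂ} (g : GT) {z : ℂ}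
    (hτ : DifferentiableAt ℝ τ z) :
    HasFDerivAt (Jfun ν μ ρ τ g)
      (wirtingerCLM
        (Jfun ν μ ρ τ g z * -conj (jfacLogDerivBar ν g 1 0
          + jfacLogDerivBar μ (ρ g) (wderiv τ z) (wderivBar τ z)))
        (Jfun ν μ ρ τ g z * (jfacLogDerivBar ν g 1 0
          + jfacLogDerivBar μ (ρ g) (wderiv τ z) (wderivBar τ z)))) z := by
  have hid : HasFDerivAt (fun w : ℂ => w) (wirtingerCLM 1 0) z :=
    (hasFDerivAt_id z).congr_fderiv (by ext1 v; simp)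
  refine ((hid.jfac_comp ν g).mul_wirtinger
    (hτ.hasFDerivAt_wirtinger.jfac_comp μ (ρ g))).congr_fderiv ?_
  simp only [Jfun, map_add]
  ring_nf

lemma wderiv_act_of_equivariant {τ : ℂ → ℂ} {g k : GT} (hτ : Differentiable ℝ τ)
    (hequiv : ∀ w, τ (GT.act g w) = GT.act k (τ w)) (z : ℂ) :
    g.a * wderiv τ (GT.act g z) = k.a * wderiv τ z ∧
      conj (g.a : ℂ) * wderivBar τ (GT.act g z) = k.a * wderivBar τ z := by
  have hfun : (fun w => τ (g.a * w + g.b)) = fun w => k.a * τ w + k.b := funext hequiv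
  obtain ⟨hl, hlbar⟩ := wderiv_comp_mul_add (a := (g.a : ℂ)) (b := g.b) (hτ (GT.act g z))
  obtain ⟨hr, hrbar⟩ := wderiv_mul_add_comp (c := (k.a : ℂ)) (d := k.b) (hτ z)
  rw [hfun] at hl hlbar
  exact ⟨hl.symm.trans hr, hlbar.symm.trans hrbar⟩

lemma Sfun_act (ν μ : ℝ) {τ : ℂ → ℂ} {g k : GT} (hτ : Differentiable ℝ τ)
    (hequiv : ∀ w, τ (GT.act g w) = GT.act k (τ w)) (z : ℂ) :
    Sfun ν μ τ (GT.act g z) = g.a * (Sfun ν μ τ z + jfacLogDerivBar ν g 1 0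
      + jfacLogDerivBar μ k (wderiv τ z) (wderivBar τ z)) := by
  obtain ⟨hp, hq⟩ := wderiv_act_of_equivariant hτ hequiv z
  have ha := Circle.coe_mul_conj g.a
  have hk := Circle.coe_mul_conj k.a
  have hp' : wderiv τ (GT.act g z) = conj (g.a : ℂ) * k.a * wderiv τ z := by
    linear_combination conj (g.a : ℂ) * hp - wderiv τ (GT.act g z) * ha
  have hq' : wderivBar τ (GT.act g z) = g.a * k.a * wderivBar τ z := by
    linear_combination (g.a : ℂ) * hq - wderivBar τ (GT.act g z) * ha
  simp only [Sfun, wderivBar_conj (hτ _), hp', hq', hequiv, jfacLogDerivBar, GT.act_inv_zero]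
  simp only [GT.act, map_add, map_mul, map_neg, map_one, Complex.conj_conj]
  linear_combination (-(ν : ℂ) * g.b) * ha
    + (μ : ℂ) * g.a * (τ z * conj (wderiv τ z) - conj (τ z) * wderivBar τ z) * hk

theorem statement17_general (ν μ : ℝ)
    (ρ : GT →* GT) (τ : ℂ → ℂ) (hτ : ContDiff ℝ (⊤ : ℕ∞) τ)
    (hequiv : ∀ (g : GT) (z : ℂ), τ (GT.act g z) = GT.act (ρ g) (τ z))
    (g : GT) (z : ℂ) :
    wderiv (fun w => Jfun ν μ (⇑ρ) τ g w) z
        = ((starRingEnd ℂ) (Sfun ν μ τ z)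
            - (g.a : ℂ) * (starRingEnd ℂ) (Sfun ν μ τ (GT.act g z))) * Jfun ν μ (⇑ρ) τ g z ∧
    wderivBar (fun w => Jfun ν μ (⇑ρ) τ g w) z
        = -(Sfun ν μ τ z - (starRingEnd ℂ) ((g.a : ℂ)) * Sfun ν μ τ (GT.act g z))
            * Jfun ν μ (⇑ρ) τ g z := by
  have hτd : Differentiable ℝ τ := hτ.differentiable (by simp)
  have hJ := hasFDerivAt_Jfun ν μ ρ g (hτd z)
  have hS : conj (g.a : ℂ) * Sfun ν μ τ (GT.act g z) - Sfun ν μ τ z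
      = jfacLogDerivBar ν g 1 0 + jfacLogDerivBar μ (ρ g) (wderiv τ z) (wderivBar τ z) := by
    rw [Sfun_act ν μ hτd (hequiv g) z, ← mul_assoc, mul_comm (conj _), Circle.coe_mul_conj]
    ring
  rw [← hS] at hJ
  refine ⟨hJ.wderiv_eq.trans ?_, hJ.wderivBar_eq.trans ?_⟩
  · simp only [map_sub, map_mul, Complex.conj_conj]
    ring
  · ring

theorem statement17 (ν μ : ℝ) (hν : 0 < ν) (hμ : 0 < μ)
    (ρ : GT →* GT) (τ : ℂ → ℂ) (hτ : ContDiff ℝ (⊤ : ℕ∞) τ)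
    (hequiv : ∀ (g : GT) (z : ℂ), τ (GT.act g z) = GT.act (ρ g) (τ z))
    (g : GT) (z : ℂ) :
    wderiv (fun w => Jfun ν μ (⇑ρ) τ g w) z
        = ((starRingEnd ℂ) (Sfun ν μ τ z)
            - (g.a : ℂ) * (starRingEnd ℂ) (Sfun ν μ τ (GT.act g z))) * Jfun ν μ (⇑ρ) τ g z ∧
    wderivBar (fun w => Jfun ν μ (⇑ρ) τ g w) z
        = -(Sfun ν μ τ z - (starRingEnd ℂ) ((g.a : ℂ)) * Sfun ν μ τ (GT.act g z))
            * Jfun ν μ (⇑ρ) τ g z :=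
  statement17_general ν μ ρ τ hτ hequiv g z
end
end

section
/- Assume B(z) is constant with value B and φ is a gauge function. For m, n ∈ ℕ let ψ_n(w) = w^n·e^{−B|w|²−iφ(w)} and let Ã be the creation operator (Ãf)(z) = −(∂f/∂z)(z) + conj(S(z))·f(z). Then for every z ∈ ℂ, (Ã^m ψ_n)(z) = (−1)^m·e^{−B|z|²−iφ(z)}·H_{m,n}(z), where H_{m,n}(z) = e^{2B|z|²}·(∂^m/∂z^m)[w ↦ w^n·e^{−2B|w|²}](z) is the complex Hermite polynomial and ∂^m/∂z^m denotes the m-fold iterated Wirtinger derivative. -/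
noncomputable section

open Complex

/-!
Write `E = e^{-B|z|²-iφ}` for the gauge factor. Since `φ` is real, `∂φ = conj (∂̄φ) = i (S̄ - B z̄)`,
so `∂E = (S̄ - 2B z̄) E` and `Ã (E h) = E (-∂h + 2B z̄ h)`. The operator `h ↦ -∂h + 2B z̄ h` equals
`-e^{2B|z|²} ∂ e^{-2B|z|²}`, so its `m`-th power is `(-1)^m e^{2B|z|²} ∂^m e^{-2B|z|²}`;
for `h = zⁿ` this is the claim.
-/

open ComplexConjugate

section Wirtinger

variable {f g : ℂ → ℂ} {z : ℂ}

lemma wderiv_neg : wderiv (fun w => -f w) z = -wderiv f z := by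
  simp only [wderiv, fderiv_fun_neg, neg_apply]; ring

lemma wderiv_sub (hf : DifferentiableAt ℝ f z) (hg : DifferentiableAt ℝ g z) :
    wderiv (fun w => f w - g w) z = wderiv f z - wderiv g z := by
  simp only [wderiv, fderiv_fun_sub hf hg, sub_apply]; ring

lemma wderiv_mul (hf : DifferentiableAt ℝ f z) (hg : DifferentiableAt ℝ g z) :
    wderiv (fun w => f w * g w) z = f z * wderiv g z + wderiv f z * g z := by
  simp only [wderiv, fderiv_fun_mul hf hg, add_apply, smul_apply, smul_eq_mul]; ring

lemma wderiv_const_mul (c : ℂ) (hf : DifferentiableAt ℝ f z) :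
    wderiv (fun w => c * f w) z = c * wderiv f z := by
  simp only [wderiv, fderiv_const_mul hf, smul_apply, smul_eq_mul]; ring

lemma wderiv_cexp (hf : DifferentiableAt ℝ f z) :
    wderiv (fun w => exp (f w)) z = exp (f z) * wderiv f z := by
  simp only [wderiv, hf.hasFDerivAt.cexp.fderiv, smul_apply, smul_eq_mul]; ring

lemma wderiv_conj_comp : wderiv (fun w => conj (f w)) z = conj (wderivBar f z) := by
  have hconj : fderiv ℝ (fun w => conj (f w)) z = (conjCLE : ℂ →L[ℝ] ℂ).comp (fderiv ℝ f z) :=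
    conjCLE.comp_fderiv
  simp only [wderiv, wderivBar, hconj, ContinuousLinearMap.coe_comp, Function.comp_apply,
    ContinuousLinearEquiv.coe_coe, conjCLE_apply, map_mul, map_add, conj_I, map_div₀, map_one,
    map_ofNat]
  ring

lemma wderiv_id : wderiv (fun w => w) z = 1 := by
  simp only [wderiv, fderiv_fun_id, ContinuousLinearMap.coe_id', id_eq, I_mul_I]; ring

lemma wderiv_conj : wderiv (fun w => conj w) z = 0 := by
  simp [wderiv_conj_comp (f := fun w => w), wderivBar]

lemma wderiv_ofReal_comp (φ : ℂ → ℝ) :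
    wderiv (fun w => (φ w : ℂ)) z = conj (wderivBar (fun w => (φ w : ℂ)) z) := by
  simpa only [conj_ofReal] using wderiv_conj_comp (f := fun w => (φ w : ℂ)) (z := z)

lemma contDiff_wderiv (hf : ContDiff ℝ (⊤ : ℕ∞) f) : ContDiff ℝ (⊤ : ℕ∞) (wderiv f) := by
  have hf' : ContDiff ℝ (⊤ : ℕ∞) (fderiv ℝ f) := hf.fderiv_right (by exact_mod_cast le_top)
  exact contDiff_const.mul
    ((hf'.clm_apply contDiff_const).sub (contDiff_const.mul (hf'.clm_apply contDiff_const)))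

lemma contDiff_iterate_wderiv (hf : ContDiff ℝ (⊤ : ℕ∞) f) (m : ℕ) :
    ContDiff ℝ (⊤ : ℕ∞) (wderiv^[m] f) := by
  induction m with
  | zero => exact hf
  | succ m ih => rw [Function.iterate_succ_apply']; exact contDiff_wderiv ih

end Wirtinger

section Gaussian

lemma ofReal_mul_norm_sq (c : ℝ) (w : ℂ) : ((c * ‖w‖ ^ 2 : ℝ) : ℂ) = c * (w * conj w) := by
  rw [mul_conj, ofReal_mul, ← Complex.sq_norm, ofReal_pow]

lemma contDiff_ofReal_mul_norm_sq (c : ℝ) :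
    ContDiff ℝ (⊤ : ℕ∞) (fun w : ℂ => ((c * ‖w‖ ^ 2 : ℝ) : ℂ)) := by
  simp only [ofReal_mul_norm_sq]
  exact contDiff_const.mul (contDiff_id.mul conjCLE.contDiff)

lemma wderiv_ofReal_mul_norm_sq (c : ℝ) (z : ℂ) :
    wderiv (fun w : ℂ => ((c * ‖w‖ ^ 2 : ℝ) : ℂ)) z = c * conj z := by
  have hconj : DifferentiableAt ℝ (fun w : ℂ => conj w) z := conjCLE.differentiableAt
  have hq : DifferentiableAt ℝ (fun w : ℂ => w * conj w) z := differentiableAt_fun_id.mul hconj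
  simp only [ofReal_mul_norm_sq]
  rw [wderiv_const_mul _ hq, wderiv_mul differentiableAt_fun_id hconj, wderiv_id, wderiv_conj]
  ring

lemma exp_mul_wderiv_gaussian_mul (c : ℝ) {h : ℂ → ℂ} {z : ℂ} (hh : DifferentiableAt ℝ h z) :
    exp ((c * ‖z‖ ^ 2 : ℝ) : ℂ) * wderiv (fun w => exp (-((c * ‖w‖ ^ 2 : ℝ) : ℂ)) * h w) z
      = wderiv h z - c * conj z * h z := by
  have hq : Differentiable ℝ (fun w : ℂ => -((c * ‖w‖ ^ 2 : ℝ) : ℂ)) :=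
    (contDiff_ofReal_mul_norm_sq c).neg.differentiable (by simp)
  rw [wderiv_mul (hq z).cexp hh, wderiv_cexp (hq z), wderiv_neg, wderiv_ofReal_mul_norm_sq,
    exp_neg]
  field_simp
  ring

end Gaussian

section Gauge

variable {ν μ B : ℝ} {τ : ℂ → ℂ} {φ : ℂ → ℝ} {z : ℂ}

lemma wderiv_gauge_exponent {s : ℂ} (hφd : DifferentiableAt ℝ φ z)
    (hφ : wderivBar (fun w => (φ w : ℂ)) z = -I * (s - B * z)) :
    wderiv (fun w => -((B * ‖w‖ ^ 2 : ℝ) : ℂ) - I * (φ w : ℂ)) z = conj s - 2 * B * conj z := by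
  have hq : DifferentiableAt ℝ (fun w : ℂ => -((B * ‖w‖ ^ 2 : ℝ) : ℂ)) z :=
    ((contDiff_ofReal_mul_norm_sq B).neg.differentiable (by simp)) z
  have hφd' : DifferentiableAt ℝ (fun w => (φ w : ℂ)) z := ofRealCLM.differentiableAt.comp z hφd
  rw [wderiv_sub hq (hφd'.const_mul I), wderiv_neg, wderiv_ofReal_mul_norm_sq,
    wderiv_const_mul I hφd', wderiv_ofReal_comp, hφ]
  simp only [map_mul, map_sub, map_neg, conj_I, conj_ofReal]
  linear_combination (B * conj z - conj s) * I_sq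

lemma atop_gauge_mul (hφd : DifferentiableAt ℝ φ z)
    (hφ : wderivBar (fun w => (φ w : ℂ)) z = -I * (Sfun ν μ τ z - B * z))
    {h : ℂ → ℂ} (hh : DifferentiableAt ℝ h z) :
    Atop ν μ τ (fun w => exp (-((B * ‖w‖ ^ 2 : ℝ) : ℂ) - I * (φ w : ℂ)) * h w) z
      = exp (-((B * ‖z‖ ^ 2 : ℝ) : ℂ) - I * (φ z : ℂ)) * (-wderiv h z + 2 * B * conj z * h z) := by
  have hE : DifferentiableAt ℝ (fun w => -((B * ‖w‖ ^ 2 : ℝ) : ℂ) - I * (φ w : ℂ)) z :=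
    (((contDiff_ofReal_mul_norm_sq B).neg.differentiable (by simp)) z).sub
      ((ofRealCLM.differentiableAt.comp z hφd).const_mul I)
  rw [Atop, wderiv_mul hE.cexp hh, wderiv_cexp hE, wderiv_gauge_exponent hφd hφ]
  ring

theorem atopIter_gauge_mul (hφd : Differentiable ℝ φ)
    (hφ : ∀ z : ℂ, wderivBar (fun w => (φ w : ℂ)) z = -I * (Sfun ν μ τ z - B * z))
    {g : ℂ → ℂ} (hg : ContDiff ℝ (⊤ : ℕ∞) g) (m : ℕ) (z : ℂ) :
    AtopIter ν μ τ m (fun w => exp (-((B * ‖w‖ ^ 2 : ℝ) : ℂ) - I * (φ w : ℂ)) *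
        (exp ((2 * B * ‖w‖ ^ 2 : ℝ) : ℂ) * g w)) z
      = (-1 : ℂ) ^ m * exp (-((B * ‖z‖ ^ 2 : ℝ) : ℂ) - I * (φ z : ℂ)) *
          (exp ((2 * B * ‖z‖ ^ 2 : ℝ) : ℂ) * wderiv^[m] g z) := by
  induction m generalizing z with
  | zero => simp [AtopIter]
  | succ m ih =>
    set H : ℂ → ℂ := fun w => (-1 : ℂ) ^ m * (exp ((2 * B * ‖w‖ ^ 2 : ℝ) : ℂ) * wderiv^[m] g w)
    have hdg : Differentiable ℝ (wderiv^[m] g) :=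
      (contDiff_iterate_wderiv hg m).differentiable (by simp)
    have hH : Differentiable ℝ H := fun w =>
      ((((contDiff_ofReal_mul_norm_sq (2 * B)).cexp.differentiable (by simp)) w).mul
        (hdg w)).const_mul _
    have hiter : AtopIter ν μ τ m (fun w => exp (-((B * ‖w‖ ^ 2 : ℝ) : ℂ) - I * (φ w : ℂ)) *
        (exp ((2 * B * ‖w‖ ^ 2 : ℝ) : ℂ) * g w))
        = fun w => exp (-((B * ‖w‖ ^ 2 : ℝ) : ℂ) - I * (φ w : ℂ)) * H w := by
      funext w; rw [ih w]; simp only [H]; ring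
    have hgauss : (fun w => exp (-((2 * B * ‖w‖ ^ 2 : ℝ) : ℂ)) * H w)
        = fun w => (-1 : ℂ) ^ m * wderiv^[m] g w := by
      funext w; simp only [H]; rw [exp_neg]; field_simp
    have hstep := exp_mul_wderiv_gaussian_mul (2 * B) (hH z)
    rw [hgauss, wderiv_const_mul _ (hdg z), ← Function.iterate_succ_apply' wderiv,
      show ((2 * B : ℝ) : ℂ) = 2 * B by push_cast; rfl] at hstep
    rw [AtopIter, Function.iterate_succ_apply', ← AtopIter, hiter,
      atop_gauge_mul (hφd z) (hφ z) (hH z)]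
    linear_combination exp (-((B * ‖z‖ ^ 2 : ℝ) : ℂ) - I * (φ z : ℂ)) * hstep

end Gauge

theorem statement18_general (ν μ : ℝ) (τ : ℂ → ℂ)
    (B : ℝ)
    (φ : ℂ → ℝ) (hφs : ContDiff ℝ (⊤ : ℕ∞) φ)
    (hφ : ∀ z : ℂ, wderivBar (fun w => (φ w : ℂ)) z = -Complex.I * (Sfun ν μ τ z - (B : ℂ) * z))
    (m n : ℕ) (z : ℂ) :
    AtopIter ν μ τ m (fun w => w ^ n * Complex.exp (-((B * ‖w‖ ^ 2 : ℝ) : ℂ) - Complex.I * (φ w : ℂ))) z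
      = (-1 : ℂ) ^ m *
          Complex.exp (-((B * ‖z‖ ^ 2 : ℝ) : ℂ) - Complex.I * (φ z : ℂ)) *
          (Complex.exp ((2 * B * ‖z‖ ^ 2 : ℝ) : ℂ) *
            (wderiv^[m] (fun w => w ^ n * Complex.exp (-((2 * B * ‖w‖ ^ 2 : ℝ) : ℂ))) z)) := by
  have hmonomial : (fun w => w ^ n * exp (-((B * ‖w‖ ^ 2 : ℝ) : ℂ) - I * (φ w : ℂ)))
      = fun w => exp (-((B * ‖w‖ ^ 2 : ℝ) : ℂ) - I * (φ w : ℂ)) *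
          (exp ((2 * B * ‖w‖ ^ 2 : ℝ) : ℂ) * (w ^ n * exp (-((2 * B * ‖w‖ ^ 2 : ℝ) : ℂ)))) := by
    funext w; rw [exp_neg]; field_simp
  rw [hmonomial]
  exact atopIter_gauge_mul (hφs.differentiable (by simp)) hφ
    ((contDiff_id.pow n).mul (contDiff_ofReal_mul_norm_sq (2 * B)).neg.cexp) m z

theorem statement18 (ν μ : ℝ) (hν : 0 < ν) (hμ : 0 < μ) (τ : ℂ → ℂ) (hτ : ContDiff ℝ (⊤ : ℕ∞) τ)
    (B : ℝ) (hB : ∀ z : ℂ, Bfun ν μ τ z = B)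
    (φ : ℂ → ℝ) (hφs : ContDiff ℝ (⊤ : ℕ∞) φ) (hφ0 : φ 0 = 0)
    (hφ : ∀ z : ℂ, wderivBar (fun w => (φ w : ℂ)) z = -Complex.I * (Sfun ν μ τ z - (B : ℂ) * z))
    (m n : ℕ) (z : ℂ) :
    AtopIter ν μ τ m (fun w => w ^ n * Complex.exp (-((B * ‖w‖ ^ 2 : ℝ) : ℂ) - Complex.I * (φ w : ℂ))) z
      = (-1 : ℂ) ^ m *
          Complex.exp (-((B * ‖z‖ ^ 2 : ℝ) : ℂ) - Complex.I * (φ z : ℂ)) *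
          (Complex.exp ((2 * B * ‖z‖ ^ 2 : ℝ) : ℂ) *
            (wderiv^[m] (fun w => w ^ n * Complex.exp (-((2 * B * ‖w‖ ^ 2 : ℝ) : ℂ))) z)) :=
  statement18_general ν μ τ B φ hφs hφ m n z
end
end
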